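/- arXiv:2407.18635 — 2 statements merged into one kernel-verified Lean document; each statement's English description precedes it below -/
import Mathlib

section
/- Wasserstein interpolation inequality: for every μ, ν ∈ P₂(ℝ^d) and every θ, θ' ∈ [0,1], W₂((1−θ')μ + θ'ν, (1−θ)μ + θν)² ≤ |θ − θ'| · W₂(μ,ν)². -/
noncomputable section

open MeasureTheory ProbabilityTheory Set Filter

namespace MFC

/-- ℝ^d -/
abbrev Rd (d : ℕ) : Type := EuclideanSpace ℝ (Fin d)

section Wasserstein

variable {E : Type*} [MeasurableSpace E] [PseudoMetricSpace E]

/-- couplings of two measures -/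
def couplings (μ ν : Measure E) : Set (Measure (E × E)) :=
  {γ | γ.map Prod.fst = μ ∧ γ.map Prod.snd = ν}

/-- squared 2-Wasserstein distance -/
def W2sq (μ ν : Measure E) : ℝ :=
  sInf ((fun γ : Measure (E × E) => ∫ p, dist p.1 p.2 ^ 2 ∂γ) '' couplings μ ν)

/-- membership in the Wasserstein space `P₂(E)` (with base point `x₀`) -/
def MemP2 (x₀ : E) (μ : Measure E) : Prop :=
  IsProbabilityMeasure μ ∧ (∫⁻ x, ENNReal.ofReal (dist x x₀ ^ 2) ∂μ) < ⊤

variable {U : Type*} [MeasurableSpace U]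

/-- membership in `L²_λ(P₂(E))`: measurable collections of laws with
square-integrable second moments -/
def MemL2 (lam : Measure U) (x₀ : E) (μ : U → Measure E) : Prop :=
  Measurable μ ∧ (∀ u, MemP2 x₀ (μ u)) ∧
    (∫⁻ u, ∫⁻ x, ENNReal.ofReal (dist x x₀ ^ 2) ∂(μ u) ∂lam) < ⊤

/-- the metric **d** on `L²_λ(P₂(E))` -/
def dL2 (lam : Measure U) (μ ν : U → Measure E) : ℝ :=
  Real.sqrt (∫ u, W2sq (μ u) (ν u) ∂lam)

/-- sequential compactness of a set of collections of measures w.r.t. the metric `dL2` -/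
def SeqCompactL2 (lam : Measure U) (x₀ : E) (K : Set (U → Measure E)) : Prop :=
  (∀ μ ∈ K, MemL2 lam x₀ μ) ∧
  ∀ x : ℕ → (U → Measure E), (∀ n, x n ∈ K) →
    ∃ y ∈ K, ∃ φ : ℕ → ℕ, StrictMono φ ∧
      Tendsto (fun n => dL2 lam (x (φ n)) y) atTop (nhds 0)

end Wasserstein

section Probability

variable {Ω : Type*} [MeasurableSpace Ω] {l : ℕ}

/-- `W` is a standard `ℝ^ℓ`-valued Brownian motion under `P`:
measurable, started at `0`, with continuous paths, independent increments and
Gaussian increments with independent coordinates of variance `t - s`. -/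
def IsStdBM (P : Measure Ω) (W : ℝ → Ω → Rd l) : Prop :=
  (∀ t, Measurable (W t)) ∧
  (∀ᵐ ω ∂P, W 0 ω = 0) ∧
  (∀ᵐ ω ∂P, Continuous fun t => W t ω) ∧
  (∀ (n : ℕ) (t : ℕ → ℝ), Monotone t →
    iIndepFun
      (fun i : Fin n => fun ω => W (t (i + 1)) ω - W (t i) ω) P) ∧
  (∀ s t : ℝ, 0 ≤ s → s ≤ t → ∀ i : Fin l,
    P.map (fun ω => (W t ω - W s ω) i) = gaussianReal 0 (Real.toNNReal (t - s))) ∧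
  (∀ s t : ℝ, 0 ≤ s → s ≤ t →
    iIndepFun
      (fun i : Fin l => fun ω => (W t ω - W s ω) i) P)

/-- the σ-algebra of `P`-null sets -/
def nullSets (P : Measure Ω) : MeasurableSpace Ω :=
  MeasurableSpace.generateFrom {s | ∃ N, MeasurableSet N ∧ P N = 0 ∧ s ⊆ N}

/-- the filtration `F^u_t = σ(W_s, s ≤ t) ∨ σ(Z) ∨ N` -/
def filtr (P : Measure Ω) (W : ℝ → Ω → Rd l) (Z : Ω → ℝ) (t : ℝ) :
    MeasurableSpace Ω :=
  (⨆ s ∈ Icc (0:ℝ) t, MeasurableSpace.comap (W s) inferInstance) ⊔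
    MeasurableSpace.comap Z inferInstance ⊔ nullSets P

/-- the path of the process `X` clamped to the time interval `[a, b]`
(representing the restriction `X_{[a,b]}`) -/
def clampPath {E : Type*} (X : ℝ → Ω → E) (a b : ℝ) (ω : Ω) : ℝ → E :=
  fun s => X (min (max s a) b) ω

/-- the probabilistic basis: a complete probability space carrying an independent
family `(W^u, Z^u)` of Brownian motions together with independent uniform variables -/
structure Basis (U : Type*) [MeasurableSpace U] (P : Measure Ω)
    (W : U → ℝ → Ω → Rd l) (Z : U → Ω → ℝ) : Prop where
  prob : IsProbabilityMeasure P
  bm : ∀ u, IsStdBM P (W u)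
  measZ : ∀ u, Measurable (Z u)
  unif : ∀ u, P.map (Z u) = volume.restrict (Ioo (0:ℝ) 1)
  indepWZ : ∀ u, IndepFun (fun ω => fun s => W u s ω) (Z u) P
  indepFam : iIndepFun
      (fun u : U => fun ω => ((fun s => W u s ω), Z u ω)) P

/-- martingale property of a real process `M` on `[t, T]` with respect to the
(raw) filtration `F` under `P` -/
def IsMartOn (P : Measure Ω) (F : ℝ → MeasurableSpace Ω) (M : ℝ → Ω → ℝ)
    (t T : ℝ) : Prop :=
  (∀ s ∈ Icc t T, Integrable (M s) P) ∧
  (∀ s ∈ Icc t T, Measurable[F s] (M s)) ∧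
  ∀ s₁ s₂ : ℝ, t ≤ s₁ → s₁ ≤ s₂ → s₂ ≤ T → (P[M s₂|F s₁]) =ᵐ[P] M s₁

/-- progressive measurability of a process w.r.t. a (raw) filtration -/
def ProgMeas {E : Type*} [MeasurableSpace E] (F : ℝ → MeasurableSpace Ω)
    (proc : ℝ → Ω → E) : Prop :=
  ∀ t : ℝ, @Measurable (Icc (0:ℝ) t × Ω) E
    (MeasurableSpace.prod inferInstance (F t)) _ fun p => proc (p.1 : ℝ) p.2

end Probability

section Control

variable {U : Type*} [MeasurableSpace U]
variable {A : Type*} [MeasurableSpace A] [PseudoMetricSpace A]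
variable {Ω : Type*} [MeasurableSpace Ω]
variable {d l : ℕ}

/-- an admissible initial condition at time `t` -/
structure IsAdmissibleIC (lam : Measure U) (P : Measure Ω)
    (W : U → ℝ → Ω → Rd l) (Z : U → Ω → ℝ) (t : ℝ) (ξ : U → Ω → Rd d) : Prop where
  measF : ∀ u, Measurable[filtr P (W u) (Z u) t] (ξ u)
  meas : ∀ u, Measurable (ξ u)
  lawMeas : Measurable fun u =>
    P.map (fun ω => (clampPath (W u) 0 t ω, Z u ω, ξ u ω))
  sqInt : (∫⁻ u, ∫⁻ ω, ENNReal.ofReal (‖ξ u ω‖ ^ 2) ∂P ∂lam) < ⊤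

/-- the control process induced by a control policy `α` -/
def ctrl (W : U → ℝ → Ω → Rd l) (Z : U → Ω → ℝ)
    (α : U → ℝ → (ℝ → Rd l) → ℝ → A) (u : U) (s : ℝ) (ω : Ω) : A :=
  α u s (clampPath (W u) 0 s ω) (Z u ω)

/-- an admissible control policy -/
structure IsAdmissiblePolicy (lam : Measure U) (P : Measure Ω)
    (W : U → ℝ → Ω → Rd l) (Z : U → Ω → ℝ) (a₀ : A) (T : ℝ)
    (α : U → ℝ → (ℝ → Rd l) → ℝ → A) : Prop where
  meas : Measurable fun p : U × ℝ × (ℝ → Rd l) × ℝ => α p.1 p.2.1 p.2.2.1 p.2.2.2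
  sqInt : (∫⁻ u, ∫⁻ s in Icc (0:ℝ) T, ∫⁻ ω,
      ENNReal.ofReal (dist (ctrl W Z α u s ω) a₀ ^ 2) ∂P ∂volume ∂lam) < ⊤

/-- the collection of marginal laws of the state at time `s` -/
def stateLaw (P : Measure Ω) (X : U → ℝ → Ω → Rd d) (s : ℝ) : U → Measure (Rd d) :=
  fun u => P.map (fun ω => X u s ω)

/-- the collection of marginal laws of the control at time `s` -/
def ctrlLaw (P : Measure Ω) (W : U → ℝ → Ω → Rd l) (Z : U → Ω → ℝ)
    (α : U → ℝ → (ℝ → Rd l) → ℝ → A) (s : ℝ) : U → Measure A :=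
  fun u => P.map (fun ω => ctrl W Z α u s ω)

/-- membership in the class `S_t` of solution processes -/
structure InSt (lam : Measure U) (P : Measure Ω)
    (W : U → ℝ → Ω → Rd l) (Z : U → Ω → ℝ) (t T : ℝ)
    (X : U → ℝ → Ω → Rd d) : Prop where
  meas : ∀ u s, Measurable (X u s)
  lawMeas : Measurable fun u =>
    P.map (fun ω => (clampPath (X u) t T ω, (fun s => W u s ω), Z u ω))
  cont : ∀ u, ∀ᵐ ω ∂P, ContinuousOn (fun s => X u s ω) (Icc t T)
  adapted : ∀ u, ∀ s ∈ Icc t T, Measurable[filtr P (W u) (Z u) s] (X u s)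
  sqInt : (∫⁻ u, ∫⁻ ω, ⨆ s ∈ Icc t T, ENNReal.ofReal (‖X u s ω‖ ^ 2) ∂P ∂lam) < ⊤

/-- `X ∈ S_t` solves the controlled state equation
`dX^u_s = b(u,X^u_s,α^u_s,(P_{X^·_s}),(P_{α^·_s})) ds + σ(...) dW^u_s`, `X^u_t = ξ^u`,
for `λ`-almost every `u`.  The stochastic differential equation is encoded through the
standard martingale characterization of the Itô integral: the compensated process `M`
is a martingale whose quadratic covariations with itself and with `W` are
`∫ σσᵀ` and `∫ σ` respectively. -/
def SolvesSDE (lam : Measure U) (P : Measure Ω)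
    (W : U → ℝ → Ω → Rd l) (Z : U → Ω → ℝ)
    (b : U → Rd d → A → (U → Measure (Rd d)) → (U → Measure A) → Rd d)
    (σc : U → Rd d → A → (U → Measure (Rd d)) → (U → Measure A) → (Fin d → Fin l → ℝ))
    (α : U → ℝ → (ℝ → Rd l) → ℝ → A)
    (t T : ℝ) (ξ : U → Ω → Rd d) (X : U → ℝ → Ω → Rd d) : Prop :=
  InSt lam P W Z t T X ∧
  (∀ᵐ u ∂lam, (∀ᵐ ω ∂P, X u t ω = ξ u ω) ∧
    (let B : ℝ → Ω → Rd d := fun s ω =>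
        b u (X u s ω) (ctrl W Z α u s ω) (stateLaw P X s) (ctrlLaw P W Z α s)
     let S : ℝ → Ω → Fin d → Fin l → ℝ := fun s ω =>
        σc u (X u s ω) (ctrl W Z α u s ω) (stateLaw P X s) (ctrlLaw P W Z α s)
     let M : ℝ → Ω → Rd d := fun s ω => X u s ω - ξ u ω - ∫ r in t..s, B r ω
     (∀ i : Fin d, IsMartOn P (filtr P (W u) (Z u)) (fun s ω => M s ω i) t T) ∧
     (∀ i k : Fin d, IsMartOn P (filtr P (W u) (Z u))
        (fun s ω => M s ω i * M s ω k - ∫ r in t..s, ∑ j, S r ω i j * S r ω k j) t T) ∧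
     (∀ i : Fin d, ∀ j : Fin l, IsMartOn P (filtr P (W u) (Z u))
        (fun s ω => M s ω i * (W u s ω j - W u t ω j) - ∫ r in t..s, S r ω i j) t T)))

/-- Assumption 1 on the coefficients `b`, `σ`, with constants `L`, `M` -/
structure Assumption1 (lam : Measure U) (a₀ : A) (L M : ℝ)
    (b : U → Rd d → A → (U → Measure (Rd d)) → (U → Measure A) → Rd d)
    (σc : U → Rd d → A → (U → Measure (Rd d)) → (U → Measure A) → (Fin d → Fin l → ℝ)) :
    Prop where
  nonnegL : 0 ≤ L
  nonnegM : 0 ≤ M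
  measb : Measurable fun p : U × Rd d × A × (U → Measure (Rd d)) × (U → Measure A) =>
    b p.1 p.2.1 p.2.2.1 p.2.2.2.1 p.2.2.2.2
  measσ : Measurable fun p : U × Rd d × A × (U → Measure (Rd d)) × (U → Measure A) =>
    σc p.1 p.2.1 p.2.2.1 p.2.2.2.1 p.2.2.2.2
  lipb : ∀ u (x x' : Rd d) a μ μ' ν, MemL2 lam (0 : Rd d) μ → MemL2 lam (0 : Rd d) μ' →
    MemL2 lam a₀ ν →
    ‖b u x a μ ν - b u x' a μ' ν‖ ≤ L * (‖x - x'‖ + dL2 lam μ μ')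
  lipσ : ∀ u (x x' : Rd d) a μ μ' ν, MemL2 lam (0 : Rd d) μ → MemL2 lam (0 : Rd d) μ' →
    MemL2 lam a₀ ν →
    ‖σc u x a μ ν - σc u x' a μ' ν‖ ≤ L * (‖x - x'‖ + dL2 lam μ μ')
  growth : ∀ u (x : Rd d) a μ ν, MemL2 lam (0 : Rd d) μ → MemL2 lam a₀ ν →
    ‖b u x a μ ν‖ + ‖σc u x a μ ν‖ ≤
      M * (1 + ‖x‖ + dist a a₀ + dL2 lam μ (fun _ => Measure.dirac (0 : Rd d))
        + dL2 lam ν (fun _ => Measure.dirac a₀))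

/-- Assumption 2 on the costs `f`, `g` (and reinforced growth of `b`, `σ`) -/
structure Assumption2 (lam : Measure U) (a₀ : A) (M : ℝ)
    (b : U → Rd d → A → (U → Measure (Rd d)) → (U → Measure A) → Rd d)
    (σc : U → Rd d → A → (U → Measure (Rd d)) → (U → Measure A) → (Fin d → Fin l → ℝ))
    (f : U → Rd d → A → (U → Measure (Rd d)) → (U → Measure A) → ℝ)
    (g : U → Rd d → (U → Measure (Rd d)) → ℝ) : Prop where
  measf : Measurable fun p : U × Rd d × A × (U → Measure (Rd d)) × (U → Measure A) =>
    f p.1 p.2.1 p.2.2.1 p.2.2.2.1 p.2.2.2.2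
  measg : Measurable fun p : U × Rd d × (U → Measure (Rd d)) => g p.1 p.2.1 p.2.2
  growthbσ : ∀ u (x : Rd d) a μ ν, MemL2 lam (0 : Rd d) μ → MemL2 lam a₀ ν →
    ‖b u x a μ ν‖ + ‖σc u x a μ ν‖ ≤
      M * (1 + ‖x‖ + dL2 lam μ (fun _ => Measure.dirac (0 : Rd d)))
  growthfg : ∀ u (x : Rd d) a μ ν, MemL2 lam (0 : Rd d) μ → MemL2 lam a₀ ν →
    |f u x a μ ν| + |g u x μ| ≤
      M * (1 + ‖x‖ ^ 2 + dL2 lam μ (fun _ => Measure.dirac (0 : Rd d)) ^ 2)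

/-- Assumption 3: local Hölder continuity of `f` and `g` in `(x, μ)` -/
structure Assumption3 (lam : Measure U) (a₀ : A) (K γ₁ γ₂ γ₃ γ₄ : ℝ)
    (f : U → Rd d → A → (U → Measure (Rd d)) → (U → Measure A) → ℝ)
    (g : U → Rd d → (U → Measure (Rd d)) → ℝ) : Prop where
  nonnegK : 0 ≤ K
  hγ₁ : γ₁ ∈ Ioc (0:ℝ) 1
  hγ₂ : γ₂ ∈ Ioc (0:ℝ) 1
  hγ₃ : γ₃ ∈ Ioc (0:ℝ) 1
  hγ₄ : γ₄ ∈ Ioc (0:ℝ) 1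
  holderf : ∀ u (x x' : Rd d) a μ μ' ν, MemL2 lam (0 : Rd d) μ → MemL2 lam (0 : Rd d) μ' →
    MemL2 lam a₀ ν →
    |f u x a μ ν - f u x' a μ' ν| ≤
      K * (‖x - x'‖ ^ γ₁ * (1 + ‖x‖ + ‖x'‖) ^ (2 - γ₁)
        + dL2 lam μ μ' ^ γ₂ *
          (1 + dL2 lam μ (fun _ => Measure.dirac (0 : Rd d))
             + dL2 lam μ' (fun _ => Measure.dirac (0 : Rd d))) ^ (2 - γ₂))
  holderg : ∀ u (x x' : Rd d) μ μ', MemL2 lam (0 : Rd d) μ → MemL2 lam (0 : Rd d) μ' →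
    |g u x μ - g u x' μ'| ≤
      K * (‖x - x'‖ ^ γ₃ * (1 + ‖x‖ + ‖x'‖) ^ (2 - γ₃)
        + dL2 lam μ μ' ^ γ₄ *
          (1 + dL2 lam μ (fun _ => Measure.dirac (0 : Rd d))
             + dL2 lam μ' (fun _ => Measure.dirac (0 : Rd d))) ^ (2 - γ₄))

/-- the running cost accumulated on `[t, θ]` -/
def runCost (lam : Measure U) (P : Measure Ω)
    (W : U → ℝ → Ω → Rd l) (Z : U → Ω → ℝ)
    (f : U → Rd d → A → (U → Measure (Rd d)) → (U → Measure A) → ℝ)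
    (α : U → ℝ → (ℝ → Rd l) → ℝ → A) (t θ : ℝ) (X : U → ℝ → Ω → Rd d) : ℝ :=
  ∫ u, (∫ ω, (∫ s in t..θ, f u (X u s ω) (ctrl W Z α u s ω)
      (stateLaw P X s) (ctrlLaw P W Z α s)) ∂P) ∂lam

/-- the cost functional `J(t, ξ, α)` evaluated on the solution `X` -/
def cost (lam : Measure U) (P : Measure Ω)
    (W : U → ℝ → Ω → Rd l) (Z : U → Ω → ℝ)
    (f : U → Rd d → A → (U → Measure (Rd d)) → (U → Measure A) → ℝ)
    (g : U → Rd d → (U → Measure (Rd d)) → ℝ)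
    (α : U → ℝ → (ℝ → Rd l) → ℝ → A) (t T : ℝ) (X : U → ℝ → Ω → Rd d) : ℝ :=
  runCost lam P W Z f α t T X + ∫ u, (∫ ω, g u (X u T ω) (stateLaw P X T) ∂P) ∂lam

/-- the value function `V(t, ξ) = inf_{α ∈ 𝒜} J(t, ξ, α)` -/
def value (lam : Measure U) (P : Measure Ω)
    (W : U → ℝ → Ω → Rd l) (Z : U → Ω → ℝ)
    (b : U → Rd d → A → (U → Measure (Rd d)) → (U → Measure A) → Rd d)
    (σc : U → Rd d → A → (U → Measure (Rd d)) → (U → Measure A) → (Fin d → Fin l → ℝ))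
    (f : U → Rd d → A → (U → Measure (Rd d)) → (U → Measure A) → ℝ)
    (g : U → Rd d → (U → Measure (Rd d)) → ℝ)
    (a₀ : A) (T : ℝ) (t : ℝ) (ξ : U → Ω → Rd d) : ℝ :=
  sInf {c : ℝ | ∃ α X, IsAdmissiblePolicy lam P W Z a₀ T α ∧
    SolvesSDE lam P W Z b σc α t T ξ X ∧ c = cost lam P W Z f g α t T X}

/-- the value function on collections of measures, `υ(t, μ) = V(t, ξ)` for any
admissible `ξ` with marginal laws `μ` -/
def valueM (lam : Measure U) (P : Measure Ω)
    (W : U → ℝ → Ω → Rd l) (Z : U → Ω → ℝ)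
    (b : U → Rd d → A → (U → Measure (Rd d)) → (U → Measure A) → Rd d)
    (σc : U → Rd d → A → (U → Measure (Rd d)) → (U → Measure A) → (Fin d → Fin l → ℝ))
    (f : U → Rd d → A → (U → Measure (Rd d)) → (U → Measure A) → ℝ)
    (g : U → Rd d → (U → Measure (Rd d)) → ℝ)
    (a₀ : A) (T : ℝ) (t : ℝ) (μ : U → Measure (Rd d)) : ℝ :=
  sInf {c : ℝ | ∃ ξ : U → Ω → Rd d, IsAdmissibleIC lam P W Z t ξ ∧
    (∀ᵐ u ∂lam, P.map (ξ u) = μ u) ∧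
    c = value lam P W Z b σc f g a₀ T t ξ}

end Control



section Ito

variable {U : Type*} [MeasurableSpace U]
variable {A : Type*} [MeasurableSpace A] [PseudoMetricSpace A]
variable {Ω : Type*} [MeasurableSpace Ω]
variable {d l : ℕ}

/-- `X` is the Itô process `X_t = X_0 + ∫_0^t b_s ds + ∫_0^t σ_s dW_s`,
encoded through the martingale characterization of the stochastic integral. -/
def IsItoProcess (P : Measure Ω)
    (W : U → ℝ → Ω → Rd l) (Z : U → Ω → ℝ)
    (X0 : U → Ω → Rd d) (bp : U → ℝ → Ω → Rd d)
    (sp : U → ℝ → Ω → Fin d → Fin l → ℝ) (T : ℝ)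
    (X : U → ℝ → Ω → Rd d) : Prop :=
  (∀ u s, Measurable (X u s)) ∧
  (∀ u, ∀ᵐ ω ∂P, X u 0 ω = X0 u ω) ∧
  (∀ u, ∀ᵐ ω ∂P, ContinuousOn (fun s => X u s ω) (Icc 0 T)) ∧
  (∀ u, ∀ s ∈ Icc (0:ℝ) T, Measurable[filtr P (W u) (Z u) s] (X u s)) ∧
  ∀ u,
    (let M : ℝ → Ω → Rd d := fun s ω => X u s ω - X0 u ω - ∫ r in (0:ℝ)..s, bp u r ω
     (∀ i : Fin d, IsMartOn P (filtr P (W u) (Z u)) (fun s ω => M s ω i) 0 T) ∧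
     (∀ i k : Fin d, IsMartOn P (filtr P (W u) (Z u))
        (fun s ω => M s ω i * M s ω k -
          ∫ r in (0:ℝ)..s, ∑ j, sp u r ω i j * sp u r ω k j) 0 T) ∧
     (∀ i : Fin d, ∀ j : Fin l, IsMartOn P (filtr P (W u) (Z u))
        (fun s ω => M s ω i * (W u s ω j - W u 0 ω j) -
          ∫ r in (0:ℝ)..s, sp u r ω i j) 0 T))

/-- the standing hypotheses on the data `(X0, b, σ)` of the Itô processes in
Section 4 of the paper -/
structure ItoData (lam : Measure U) (P : Measure Ω)
    (W : U → ℝ → Ω → Rd l) (Z : U → Ω → ℝ)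
    (X0 : U → Ω → Rd d) (bp : U → ℝ → Ω → Rd d)
    (sp : U → ℝ → Ω → Fin d → Fin l → ℝ) (T : ℝ) : Prop where
  measX0 : ∀ u, Measurable (X0 u)
  adaptX0 : ∀ u, Measurable[filtr P (W u) (Z u) 0] (X0 u)
  progb : ∀ u, ProgMeas (filtr P (W u) (Z u)) (bp u)
  progσ : ∀ u, ProgMeas (filtr P (W u) (Z u)) (sp u)
  lawMeas : Measurable fun p : U × ℝ =>
    P.map fun ω => (X0 p.1 ω, bp p.1 p.2 ω, sp p.1 p.2 ω)
  sqInt : (∫⁻ u, ((∫⁻ ω, ENNReal.ofReal (‖X0 u ω‖ ^ 2) ∂P) +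
      ∫⁻ s in Icc (0:ℝ) T, ∫⁻ ω,
        ENNReal.ofReal (‖bp u s ω‖ ^ 2 + ‖sp u s ω‖ ^ 2) ∂P ∂volume) ∂lam) < ⊤

variable (lam : Measure U) (T : ℝ)

/-- the class `C̃^{1,2}([0,T] × L²_λ(P₂(ℝ^d)))` of test functions, bundled with
its time derivative `vt`, its linear functional derivative `dm`, and the spatial
gradient `dmx` and Hessian `dmxx` of the latter. -/
structure C12 (lam : Measure U) (T : ℝ) (d : ℕ) where
  v : ℝ → (U → Measure (Rd d)) → ℝ
  vt : ℝ → (U → Measure (Rd d)) → ℝ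
  dm : ℝ → (U → Measure (Rd d)) → U → Rd d → ℝ
  dmx : ℝ → (U → Measure (Rd d)) → U → Rd d → Rd d
  dmxx : ℝ → (U → Measure (Rd d)) → U → Rd d → (Rd d →L[ℝ] Rd d)
  timeDeriv : ∀ μ, MemL2 lam (0 : Rd d) μ → ∀ t ∈ Icc 0 T,
    HasDerivAt (fun s => v s μ) (vt t μ) t
  timeDerivCont : ∀ t ∈ Icc 0 T, ∀ μ, MemL2 lam (0 : Rd d) μ → ∀ ε > 0, ∃ δ > 0,
    ∀ s ∈ Icc 0 T, ∀ ν, MemL2 lam (0 : Rd d) ν →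
      |s - t| < δ → dL2 lam ν μ < δ → |vt s ν - vt t μ| < ε
  dmMeas : Measurable fun p : (ℝ × (U → Measure (Rd d))) × U × Rd d =>
    dm p.1.1 p.1.2 p.2.1 p.2.2
  dmGrowth : ∀ K : Set (U → Measure (Rd d)), SeqCompactL2 lam (0 : Rd d) K →
    ∃ C > 0, ∀ t ∈ Icc 0 T, ∀ μ ∈ K, ∀ u (x : Rd d),
      |dm t μ u x| ≤ C * (1 + ‖x‖ ^ 2)
  dmFund : ∀ t ∈ Icc 0 T, ∀ μ ν, MemL2 lam (0 : Rd d) μ → MemL2 lam (0 : Rd d) ν →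
    v t ν - v t μ = ∫ θ in (0:ℝ)..1, (∫ u,
      ((∫ x, dm t (fun w => ENNReal.ofReal (1 - θ) • μ w + ENNReal.ofReal θ • ν w) u x
          ∂(ν u)) -
        ∫ x, dm t (fun w => ENNReal.ofReal (1 - θ) • μ w + ENNReal.ofReal θ • ν w) u x
          ∂(μ u)) ∂lam)
  grad : ∀ t ∈ Icc 0 T, ∀ μ, MemL2 lam (0 : Rd d) μ → ∀ u (x : Rd d),
    HasGradientAt (dm t μ u) (dmx t μ u x) x
  hess : ∀ t ∈ Icc 0 T, ∀ μ, MemL2 lam (0 : Rd d) μ → ∀ u (x : Rd d),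
    HasFDerivAt (dmx t μ u) (dmxx t μ u x) x
  hessCont : ∀ t ∈ Icc 0 T, ∀ μ, MemL2 lam (0 : Rd d) μ → ∀ u,
    Continuous fun x => dmxx t μ u x
  gradGrowth : ∃ C ≥ (0:ℝ),
    (∀ t ∈ Icc 0 T, ∀ μ, MemL2 lam (0 : Rd d) μ → ∀ u (x : Rd d),
      ‖dmx t μ u x‖ ≤ C * (1 + ‖x‖ + dL2 lam μ (fun _ => Measure.dirac (0 : Rd d)))) ∧
    (∀ t ∈ Icc 0 T, ∀ μ, MemL2 lam (0 : Rd d) μ → ∀ u (x : Rd d),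
      ‖dmxx t μ u x‖ ≤ C)
  contTMu : ∀ u, ∀ H : Set (Rd d), IsCompact H → ∀ t ∈ Icc 0 T, ∀ μ,
    MemL2 lam (0 : Rd d) μ → ∀ ε > 0, ∃ δ > 0,
      ∀ s ∈ Icc 0 T, ∀ ν, MemL2 lam (0 : Rd d) ν →
        |s - t| < δ → dL2 lam ν μ < δ → ∀ x ∈ H,
          ‖dmx s ν u x - dmx t μ u x‖ < ε ∧ ‖dmxx s ν u x - dmxx t μ u x‖ < ε

end Ito

section Bellman

variable {U : Type*} [MeasurableSpace U]
variable {A : Type*} [MeasurableSpace A] [PseudoMetricSpace A]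
variable {Ω : Type*} [MeasurableSpace Ω]
variable {d l : ℕ}

/-- the term `∂²_x(δφ/δm) : σσᵀ` -/
def hessContract (Hs : Rd d →L[ℝ] Rd d) (S : Fin d → Fin l → ℝ) : ℝ :=
  ∑ i, ∑ k, (Hs (EuclideanSpace.single k 1)) i * (∑ j, S i j * S k j)

/-- the Hamiltonian `ℋ(u, t, π, φ)` -/
def Ham (lam : Measure U)
    (b : U → Rd d → A → (U → Measure (Rd d)) → (U → Measure A) → Rd d)
    (σc : U → Rd d → A → (U → Measure (Rd d)) → (U → Measure A) → (Fin d → Fin l → ℝ))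
    (f : U → Rd d → A → (U → Measure (Rd d)) → (U → Measure A) → ℝ)
    (T : ℝ) (φ : C12 lam T d) (u : U) (t : ℝ)
    (π : U → Measure (Rd d × A)) : ℝ :=
  let π₁ : U → Measure (Rd d) := fun v => (π v).map Prod.fst
  let π₂ : U → Measure A := fun v => (π v).map Prod.snd
  ∫ p : Rd d × A,
    ((∑ i, φ.dmx t π₁ u p.1 i * (b u p.1 p.2 π₁ π₂) i)
      + (1/2) * hessContract (φ.dmxx t π₁ u p.1) (σc u p.1 p.2 π₁ π₂)
      + f u p.1 p.2 π₁ π₂) ∂(π u)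

/-- `inf { ∫_U ℋ(u,t,π,φ) λ(du) : π ∈ L²_λ(P₂(ℝ^d×A)), π₁ = μ }` -/
def HamInf (lam : Measure U) (a₀ : A)
    (b : U → Rd d → A → (U → Measure (Rd d)) → (U → Measure A) → Rd d)
    (σc : U → Rd d → A → (U → Measure (Rd d)) → (U → Measure A) → (Fin d → Fin l → ℝ))
    (f : U → Rd d → A → (U → Measure (Rd d)) → (U → Measure A) → ℝ)
    (T : ℝ) (φ : C12 lam T d) (t : ℝ) (μ : U → Measure (Rd d)) : ℝ :=
  sInf {h : ℝ | ∃ π : U → Measure (Rd d × A),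
    MemL2 lam ((0 : Rd d), a₀) π ∧ (∀ u, (π u).map Prod.fst = μ u) ∧
    h = ∫ u, Ham lam b σc f T φ u t π ∂lam}

/-- `w` is a classical solution of the Bellman equation with its terminal condition -/
def IsBellmanSolution (lam : Measure U) (a₀ : A)
    (b : U → Rd d → A → (U → Measure (Rd d)) → (U → Measure A) → Rd d)
    (σc : U → Rd d → A → (U → Measure (Rd d)) → (U → Measure A) → (Fin d → Fin l → ℝ))
    (f : U → Rd d → A → (U → Measure (Rd d)) → (U → Measure A) → ℝ)
    (g : U → Rd d → (U → Measure (Rd d)) → ℝ)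
    (T : ℝ) (w : C12 lam T d) : Prop :=
  (∀ t ∈ Ico (0:ℝ) T, ∀ μ, MemL2 lam (0 : Rd d) μ →
    - w.vt t μ - HamInf lam a₀ b σc f T w t μ = 0) ∧
  (∀ μ, MemL2 lam (0 : Rd d) μ →
    w.v T μ = ∫ u, (∫ x, g u x μ ∂(μ u)) ∂lam)

/-- the upper semicontinuous envelope `w^*` (computed through approach from `s < T`) -/
def upEnv (lam : Measure U) (T : ℝ) (w : ℝ → (U → Measure (Rd d)) → ℝ)
    (t : ℝ) (μ : U → Measure (Rd d)) : ℝ :=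
  sInf {c : ℝ | ∃ δ > 0, ∀ s ∈ Ico (0:ℝ) T, ∀ ν, MemL2 lam (0 : Rd d) ν →
    |s - t| < δ → dL2 lam ν μ < δ → w s ν ≤ c}

/-- the lower semicontinuous envelope `w_*` -/
def lowEnv (lam : Measure U) (T : ℝ) (w : ℝ → (U → Measure (Rd d)) → ℝ)
    (t : ℝ) (μ : U → Measure (Rd d)) : ℝ :=
  sSup {c : ℝ | ∃ δ > 0, ∀ s ∈ Ico (0:ℝ) T, ∀ ν, MemL2 lam (0 : Rd d) ν →
    |s - t| < δ → dL2 lam ν μ < δ → c ≤ w s ν}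

/-- viscosity subsolution of the Bellman equation with terminal condition -/
def IsViscositySubsolution (lam : Measure U) (a₀ : A)
    (b : U → Rd d → A → (U → Measure (Rd d)) → (U → Measure A) → Rd d)
    (σc : U → Rd d → A → (U → Measure (Rd d)) → (U → Measure A) → (Fin d → Fin l → ℝ))
    (f : U → Rd d → A → (U → Measure (Rd d)) → (U → Measure A) → ℝ)
    (g : U → Rd d → (U → Measure (Rd d)) → ℝ)
    (T : ℝ) (w : ℝ → (U → Measure (Rd d)) → ℝ) : Prop :=
  (∀ μ, MemL2 lam (0 : Rd d) μ →
    upEnv lam T w T μ ≤ ∫ u, (∫ x, g u x μ ∂(μ u)) ∂lam) ∧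
  ∀ φ : C12 lam T d, ∀ t ∈ Icc (0:ℝ) T, ∀ μ, MemL2 lam (0 : Rd d) μ →
    (∀ s ∈ Icc (0:ℝ) T, ∀ ν, MemL2 lam (0 : Rd d) ν →
      upEnv lam T w s ν - φ.v s ν ≤ upEnv lam T w t μ - φ.v t μ) →
    - φ.vt t μ - HamInf lam a₀ b σc f T φ t μ ≤ 0

/-- viscosity supersolution of the Bellman equation with terminal condition -/
def IsViscositySupersolution (lam : Measure U) (a₀ : A)
    (b : U → Rd d → A → (U → Measure (Rd d)) → (U → Measure A) → Rd d)
    (σc : U → Rd d → A → (U → Measure (Rd d)) → (U → Measure A) → (Fin d → Fin l → ℝ))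
    (f : U → Rd d → A → (U → Measure (Rd d)) → (U → Measure A) → ℝ)
    (g : U → Rd d → (U → Measure (Rd d)) → ℝ)
    (T : ℝ) (w : ℝ → (U → Measure (Rd d)) → ℝ) : Prop :=
  (∀ μ, MemL2 lam (0 : Rd d) μ →
    (∫ u, (∫ x, g u x μ ∂(μ u)) ∂lam) ≤ lowEnv lam T w T μ) ∧
  ∀ φ : C12 lam T d, ∀ t ∈ Icc (0:ℝ) T, ∀ μ, MemL2 lam (0 : Rd d) μ →
    (∀ s ∈ Icc (0:ℝ) T, ∀ ν, MemL2 lam (0 : Rd d) ν →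
      lowEnv lam T w t μ - φ.v t μ ≤ lowEnv lam T w s ν - φ.v s ν) →
    0 ≤ - φ.vt t μ - HamInf lam a₀ b σc f T φ t μ

end Bellman

end MFC

open MFC MeasureTheory ProbabilityTheory Set Filter

/-!
For `θ' ≤ θ` and a coupling `γ` of `μ` and `ν`, couple `(1 - θ') μ + θ' ν` with `(1 - θ) μ + θ ν`
by leaving the common part `(1 - θ) μ + θ' ν` on the diagonal, where it costs nothing, and moving
only the remaining mass `θ - θ'` along `γ`. This costs `(θ - θ')` times the cost of `γ`; the case
`θ < θ'` follows by exchanging `μ` and `ν`.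
-/

namespace MFC

section Couplings

variable {E : Type*} [MeasurableSpace E]

def interp (μ ν : Measure E) (θ : ℝ) : Measure E :=
  ENNReal.ofReal (1 - θ) • μ + ENNReal.ofReal θ • ν

lemma interp_comm (μ ν : Measure E) (θ : ℝ) : interp μ ν θ = interp ν μ (1 - θ) := by
  rw [interp, interp, sub_sub_cancel, add_comm]

lemma add_mem_couplings {μ₁ ν₁ μ₂ ν₂ : Measure E} {γ₁ γ₂ : Measure (E × E)}
    (h₁ : γ₁ ∈ couplings μ₁ ν₁) (h₂ : γ₂ ∈ couplings μ₂ ν₂) :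
    γ₁ + γ₂ ∈ couplings (μ₁ + μ₂) (ν₁ + ν₂) :=
  ⟨by rw [Measure.map_add _ _ measurable_fst, h₁.1, h₂.1],
    by rw [Measure.map_add _ _ measurable_snd, h₁.2, h₂.2]⟩

lemma smul_mem_couplings {μ ν : Measure E} {γ : Measure (E × E)} (c : ENNReal)
    (h : γ ∈ couplings μ ν) : c • γ ∈ couplings (c • μ) (c • ν) :=
  ⟨by rw [Measure.map_smul, h.1], by rw [Measure.map_smul, h.2]⟩

lemma map_swap_mem_couplings {μ ν : Measure E} {γ : Measure (E × E)}
    (h : γ ∈ couplings μ ν) : γ.map Prod.swap ∈ couplings ν μ :=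
  ⟨by rw [Measure.map_map measurable_fst measurable_swap]; exact h.2,
    by rw [Measure.map_map measurable_snd measurable_swap]; exact h.1⟩

lemma map_diag_mem_couplings (μ : Measure E) :
    μ.map (fun x => (x, x)) ∈ couplings μ μ := by
  have hdiag : Measurable fun x : E => (x, x) := measurable_id.prodMk measurable_id
  exact ⟨by rw [Measure.map_map measurable_fst hdiag]; exact Measure.map_id,
    by rw [Measure.map_map measurable_snd hdiag]; exact Measure.map_id⟩

lemma prod_mem_couplings (μ ν : Measure E) [IsProbabilityMeasure μ] [IsProbabilityMeasure ν] :
    μ.prod ν ∈ couplings μ ν :=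
  ⟨by simp, by simp⟩

def interpCoupling (μ ν : Measure E) (γ : Measure (E × E)) (θ' θ : ℝ) : Measure (E × E) :=
  ENNReal.ofReal (1 - θ) • μ.map (fun x => (x, x)) + ENNReal.ofReal θ' • ν.map (fun x => (x, x))
    + ENNReal.ofReal (θ - θ') • γ

lemma interpCoupling_mem_couplings {μ ν : Measure E} {γ : Measure (E × E)}
    (hγ : γ ∈ couplings μ ν) {θ θ' : ℝ} (h0 : 0 ≤ θ') (hle : θ' ≤ θ) (h1 : θ ≤ 1) :
    interpCoupling μ ν γ θ' θ ∈ couplings (interp μ ν θ') (interp μ ν θ) := by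
  have h := add_mem_couplings
    (add_mem_couplings (smul_mem_couplings (ENNReal.ofReal (1 - θ)) (map_diag_mem_couplings μ))
      (smul_mem_couplings (ENNReal.ofReal θ') (map_diag_mem_couplings ν)))
    (smul_mem_couplings (ENNReal.ofReal (θ - θ')) hγ)
  have hμ : ENNReal.ofReal (1 - θ') = ENNReal.ofReal (1 - θ) + ENNReal.ofReal (θ - θ') := by
    rw [← ENNReal.ofReal_add (sub_nonneg.2 h1) (sub_nonneg.2 hle), sub_add_sub_cancel]
  have hν : ENNReal.ofReal θ = ENNReal.ofReal θ' + ENNReal.ofReal (θ - θ') := by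
    rw [← ENNReal.ofReal_add h0 (sub_nonneg.2 hle), add_sub_cancel]
  rw [interpCoupling, interp, interp, hμ, hν, add_smul, add_smul]
  convert h using 2 <;> abel

end Couplings

section Cost

variable {E : Type*} [MeasurableSpace E] [PseudoMetricSpace E]

def sqCost (γ : Measure (E × E)) : ℝ := ∫ p, dist p.1 p.2 ^ 2 ∂γ

lemma sqCost_nonneg (γ : Measure (E × E)) : 0 ≤ sqCost γ :=
  integral_nonneg fun _ => sq_nonneg _

lemma sqCost_smul (c : ENNReal) (γ : Measure (E × E)) :
    sqCost (c • γ) = c.toReal * sqCost γ := by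
  simp only [sqCost, integral_smul_measure, smul_eq_mul]

lemma sqCost_map_swap (γ : Measure (E × E)) : sqCost (γ.map Prod.swap) = sqCost γ := by
  rw [sqCost, show (Prod.swap : E × E → E × E) = MeasurableEquiv.prodComm from rfl,
    integral_map_equiv]
  simp only [MeasurableEquiv.prodComm, MeasurableEquiv.coe_mk, Equiv.prodComm_apply,
    Prod.fst_swap, Prod.snd_swap, dist_comm, sqCost]

lemma W2sq_le_sqCost {μ ν : Measure E} {γ : Measure (E × E)} (h : γ ∈ couplings μ ν) :
    W2sq μ ν ≤ sqCost γ :=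
  csInf_le ⟨0, by rintro _ ⟨γ, -, rfl⟩; exact sqCost_nonneg γ⟩ ⟨γ, h, rfl⟩

lemma W2sq_le_mul_W2sq {μ ν α β : Measure E} {a : ℝ} (ha : 0 ≤ a)
    (hne : (couplings μ ν).Nonempty)
    (h : ∀ γ ∈ couplings μ ν, W2sq α β ≤ a * sqCost γ) : W2sq α β ≤ a * W2sq μ ν := by
  change W2sq α β ≤ a • sInf (sqCost '' couplings μ ν)
  rw [← Real.sInf_smul_of_nonneg ha]
  refine le_csInf (hne.image _).smul_set ?_
  rintro _ ⟨_, ⟨γ, hγ, rfl⟩, rfl⟩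
  exact h γ hγ

lemma W2sq_comm (μ ν : Measure E) : W2sq μ ν = W2sq ν μ := by
  suffices h : ∀ μ ν : Measure E, sqCost '' couplings μ ν ⊆ sqCost '' couplings ν μ from
    congrArg sInf ((h μ ν).antisymm (h ν μ))
  rintro μ ν _ ⟨γ, hγ, rfl⟩
  exact ⟨γ.map Prod.swap, map_swap_mem_couplings hγ, sqCost_map_swap γ⟩

end Cost

lemma integral_add_measure_of_ae_eq_zero {α G : Type*} [MeasurableSpace α] [NormedAddCommGroup G]
    [NormedSpace ℝ G] {μ ν : Measure α} {f : α → G} (hf : f =ᵐ[μ] 0) :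
    ∫ x, f x ∂(μ + ν) = ∫ x, f x ∂ν := by
  have hμ : Integrable f μ := (integrable_zero _ _ _).congr hf.symm
  by_cases hν : Integrable f ν
  · rw [integral_add_measure hμ hν, integral_eq_zero_of_ae hf, zero_add]
  · rw [integral_undef hν, integral_undef fun h => hν (integrable_add_measure.1 h).2]

section Interpolation

variable {E : Type*} [PseudoMetricSpace E] [MeasurableSpace E] [OpensMeasurableSpace E]
  [SecondCountableTopology E]

lemma sq_dist_ae_eq_zero_map_diag (μ : Measure E) :
    (fun p : E × E => dist p.1 p.2 ^ 2) =ᵐ[μ.map fun x => (x, x)] 0 := by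
  have hdiag : Measurable fun x : E => (x, x) := measurable_id.prodMk measurable_id
  have hzero : MeasurableSet {p : E × E | dist p.1 p.2 ^ 2 = 0} :=
    (measurable_dist.pow_const 2) (measurableSet_singleton 0)
  refine (ae_map_iff hdiag.aemeasurable hzero).2 ?_
  filter_upwards with x
  simp

lemma sqCost_interpCoupling (μ ν : Measure E) (γ : Measure (E × E)) {θ θ' : ℝ}
    (hle : θ' ≤ θ) : sqCost (interpCoupling μ ν γ θ' θ) = (θ - θ') * sqCost γ := by
  have hdiag : (fun p : E × E => dist p.1 p.2 ^ 2) =ᵐ[ENNReal.ofReal (1 - θ) •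
      μ.map (fun x => (x, x)) + ENNReal.ofReal θ' • ν.map (fun x => (x, x))] 0 :=
    ae_add_measure_iff.2 ⟨Measure.ae_smul_measure (sq_dist_ae_eq_zero_map_diag μ) _,
      Measure.ae_smul_measure (sq_dist_ae_eq_zero_map_diag ν) _⟩
  rw [sqCost, interpCoupling, integral_add_measure_of_ae_eq_zero hdiag, ← sqCost, sqCost_smul,
    ENNReal.toReal_ofReal (sub_nonneg.2 hle)]

theorem W2sq_interp_le_of_le {μ ν : Measure E} (hne : (couplings μ ν).Nonempty) {θ θ' : ℝ}
    (h0 : 0 ≤ θ') (hle : θ' ≤ θ) (h1 : θ ≤ 1) :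
    W2sq (interp μ ν θ') (interp μ ν θ) ≤ (θ - θ') * W2sq μ ν :=
  W2sq_le_mul_W2sq (sub_nonneg.2 hle) hne fun γ hγ =>
    sqCost_interpCoupling μ ν γ hle ▸ W2sq_le_sqCost (interpCoupling_mem_couplings hγ h0 hle h1)

theorem W2sq_interp_le {μ ν : Measure E} (hne : (couplings μ ν).Nonempty) {θ θ' : ℝ}
    (hθ : θ ∈ Icc (0 : ℝ) 1) (hθ' : θ' ∈ Icc (0 : ℝ) 1) :
    W2sq (interp μ ν θ') (interp μ ν θ) ≤ |θ - θ'| * W2sq μ ν := by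
  rcases le_total θ' θ with hle | hle
  · rw [abs_of_nonneg (sub_nonneg.2 hle)]
    exact W2sq_interp_le_of_le hne hθ'.1 hle hθ.2
  · have hne' : (couplings ν μ).Nonempty :=
      let ⟨γ, hγ⟩ := hne; ⟨γ.map Prod.swap, map_swap_mem_couplings hγ⟩
    rw [abs_sub_comm, abs_of_nonneg (sub_nonneg.2 hle), interp_comm μ ν θ', interp_comm μ ν θ,
      W2sq_comm μ ν, ← sub_sub_sub_cancel_left θ θ' 1]
    exact W2sq_interp_le_of_le hne' (sub_nonneg.2 hθ'.2) (by linarith) (by linarith [hθ.1])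

end Interpolation

end MFC

/-- Wasserstein interpolation inequality:
`W₂((1−θ')μ + θ'ν, (1−θ)μ + θν)² ≤ |θ − θ'| ⋅ W₂(μ,ν)²`. -/
theorem wasserstein_interpolation_inequality
    {d : ℕ} (μ ν : Measure (Rd d))
    (hμ : MemP2 (0 : Rd d) μ) (hν : MemP2 (0 : Rd d) ν)
    (θ θ' : ℝ) (hθ : θ ∈ Icc (0:ℝ) 1) (hθ' : θ' ∈ Icc (0:ℝ) 1) :
    W2sq (ENNReal.ofReal (1 - θ') • μ + ENNReal.ofReal θ' • ν)
        (ENNReal.ofReal (1 - θ) • μ + ENNReal.ofReal θ • ν) ≤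
      |θ - θ'| * W2sq μ ν :=
  have := hμ.1
  have := hν.1
  W2sq_interp_le ⟨μ.prod ν, prod_mem_couplings μ ν⟩ hθ hθ'
end
end

section
/- Lemma (jointly measurable Skorohod representation of a measurable family of laws). Let U be a Polish space, S a Polish space, (Y^u)_{u∈U} a family of random variables each uniformly distributed on (0,1), and (Φ^u)_{u∈U} a family of Borel maps from (0,1) to S such that the map u ↦ L(Φ^u(Y^u)) is Borel measurable from U to the space of Borel probability measures on S. Then there exists a jointly Borel measurable map Φ̃ : U×(0,1) → S such that L(Φ̃(u,Y)) = L(Φ^u(Y^u)) for every u ∈ U, where Y is any random variable uniformly distributed on (0,1) (defined on an arbitrary probability space). -/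
noncomputable section

open MeasureTheory ProbabilityTheory Set Filter

open MFC MeasureTheory ProbabilityTheory Set Filter

open scoped unitInterval

lemma unitInterval.map_coe_volume :
    (volume : Measure I).map Subtype.val = volume.restrict (Ioo (0 : ℝ) 1) :=
  unitInterval.measurePreserving_coe.map_eq.trans (Measure.restrict_congr_set Ioo_ae_eq_Icc).symm

theorem ProbabilityTheory.Kernel.exists_measurable_map_restrict_Ioo_eq
    {X Y : Type*} {mX : MeasurableSpace X} [Nonempty Y] {mY : MeasurableSpace Y}
    [StandardBorelSpace Y] (κ : Kernel X Y) [IsMarkovKernel κ] :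
    ∃ f : X → ℝ → Y, Measurable (Function.uncurry f) ∧
      ∀ a, (volume.restrict (Ioo (0 : ℝ) 1)).map (f a) = κ a := by
  obtain ⟨f, hf, hfκ⟩ := κ.exists_measurable_map_eq_unitInterval
  refine ⟨fun a y => f a (projIcc 0 1 zero_le_one y), by fun_prop, fun a => ?_⟩
  rw [← unitInterval.map_coe_volume, Measure.map_map (by fun_prop) (by fun_prop), ← hfκ]
  congr 1
  funext t
  exact congrArg (f a) (projIcc_val zero_le_one t)

theorem jointly_measurable_skorohod_representation_general
    {U : Type} [MeasurableSpace U]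
    {S : Type} [TopologicalSpace S] [PolishSpace S] [MeasurableSpace S] [BorelSpace S]
    {Ω : Type} [MeasurableSpace Ω] (P : Measure Ω) [IsProbabilityMeasure P]
    (Y : U → Ω → ℝ) (hYmeas : ∀ u, Measurable (Y u))
    (Φ : U → ℝ → S) (hΦ : ∀ u, Measurable (Φ u))
    (hlawMeas : Measurable fun u => P.map (fun ω => Φ u (Y u ω))) :
    ∃ Φt : U → ℝ → S, Measurable (fun p : U × ℝ => Φt p.1 p.2) ∧
      ∀ u, ∀ (Ω' : Type) (_ : MeasurableSpace Ω') (P' : Measure Ω') (Y' : Ω' → ℝ),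
        IsProbabilityMeasure P' → Measurable Y' →
        P'.map Y' = volume.restrict (Ioo (0:ℝ) 1) →
        P'.map (fun ω => Φt u (Y' ω)) = P.map (fun ω => Φ u (Y u ω)) := by
  rcases isEmpty_or_nonempty U with _ | ⟨⟨u₀⟩⟩
  · exact ⟨Φ, measurable_of_empty _, fun u => isEmptyElim u⟩
  have : Nonempty S := ⟨Φ u₀ 0⟩
  let κ : Kernel U S := ⟨fun u => P.map (fun ω => Φ u (Y u ω)), hlawMeas⟩
  have : IsMarkovKernel κ :=
    ⟨fun u => Measure.isProbabilityMeasure_map ((hΦ u).comp (hYmeas u)).aemeasurable⟩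
  obtain ⟨f, hf, hfκ⟩ := κ.exists_measurable_map_restrict_Ioo_eq
  refine ⟨f, hf, fun u Ω' _ P' Y' _ hY'meas hY'law => ?_⟩
  have hfu : Measurable (f u) := hf.of_uncurry_left
  calc P'.map (fun ω => f u (Y' ω)) = (P'.map Y').map (f u) := (Measure.map_map hfu hY'meas).symm
    _ = κ u := by rw [hY'law, hfκ]

/-- Lemma (jointly measurable Skorohod representation of a measurable family of
laws): if `u ↦ L(Φ^u(Y^u))` is Borel measurable, then there is a jointly Borel
measurable `Φ̃ : U × (0,1) → S` with `L(Φ̃(u, Y)) = L(Φ^u(Y^u))` for every `u`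
and every uniformly distributed `Y` on an arbitrary probability space. -/
theorem jointly_measurable_skorohod_representation
    {U : Type} [TopologicalSpace U] [PolishSpace U] [MeasurableSpace U] [BorelSpace U]
    {S : Type} [TopologicalSpace S] [PolishSpace S] [MeasurableSpace S] [BorelSpace S]
    {Ω : Type} [MeasurableSpace Ω] (P : Measure Ω) [IsProbabilityMeasure P]
    (Y : U → Ω → ℝ) (hYmeas : ∀ u, Measurable (Y u))
    (hY : ∀ u, P.map (Y u) = volume.restrict (Ioo (0:ℝ) 1))
    (Φ : U → ℝ → S) (hΦ : ∀ u, Measurable (Φ u))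
    (hlawMeas : Measurable fun u => P.map (fun ω => Φ u (Y u ω))) :
    ∃ Φt : U → ℝ → S, Measurable (fun p : U × ℝ => Φt p.1 p.2) ∧
      ∀ u, ∀ (Ω' : Type) (_ : MeasurableSpace Ω') (P' : Measure Ω') (Y' : Ω' → ℝ),
        IsProbabilityMeasure P' → Measurable Y' →
        P'.map Y' = volume.restrict (Ioo (0:ℝ) 1) →
        P'.map (fun ω => Φt u (Y' ω)) = P.map (fun ω => Φ u (Y u ω)) :=
  jointly_measurable_skorohod_representation_general P Y hYmeas Φ hΦ hlawMeas
end
end
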